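/- Suppose G and Ĝ are symmetric positive definite matrices with ‖G − Ĝ‖ ≤ ε where ε < (3/4) λ_min(G). Then ‖G^{1/2} − Ĝ^{1/2}‖ ≤ ε / λ_min(G)^{1/2}. -/

import Mathlib

noncomputable def opNorm {d : ℕ} (M : Matrix (Fin d) (Fin d) ℝ) : ℝ :=
  ‖Matrix.toEuclideanCLM (𝕜 := ℝ) M‖

/-- The square root of a positive semidefinite matrix, as `Matrix.PosSemidef.sqrt` was defined
in the older Mathlib. -/
noncomputable def Matrix.PosSemidef.sqrt {n : Type*} [Fintype n] [DecidableEq n]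
    {A : Matrix n n ℝ} (hA : A.PosSemidef) : Matrix n n ℝ :=
  hA.1.eigenvectorUnitary.1 * Matrix.diagonal ((↑) ∘ Real.sqrt ∘ hA.1.eigenvalues) *
    (star hA.1.eigenvectorUnitary : Matrix n n ℝ)


/-!
Write `X = G^{1/2}`, `Y = Ĝ^{1/2}` and `D = X - Y`, so that `G - Ĝ = X D + D Y`. Take an
eigenvector `v` of the symmetric matrix `D` whose eigenvalue `μ` has `|μ| = ‖D‖`. Then
`⟪(G - Ĝ) v, v⟫ = μ (⟪X v, v⟫ + ⟪Y v, v⟫)`, where `⟪Y v, v⟫ ≥ 0` and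
`⟪X v, v⟫ ≥ λ_min(G)^{1/2} ‖v‖²`, hence `λ_min(G)^{1/2} ‖D‖ ≤ ‖G - Ĝ‖`.
-/

open Module Module.End
open scoped InnerProductSpace

section FiniteDimensional

variable {E : Type*} [NormedAddCommGroup E] [InnerProductSpace ℝ E] [FiniteDimensional ℝ E]

theorem IsSelfAdjoint.exists_hasEigenvalue_abs_eq_norm [Nontrivial E] {T : E →L[ℝ] E}
    (hT : IsSelfAdjoint T) : ∃ μ, HasEigenvalue (T : End ℝ E) μ ∧ |μ| = ‖T‖ := by
  have hne : (spectrum ℝ T).Nonempty := by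
    rw [ContinuousLinearMap.spectrum_eq]
    exact ⟨_, hT.isSymmetric.hasEigenvalue_iSup_of_finiteDimensional.mem_spectrum⟩
  obtain ⟨μ, hμ, hnorm⟩ := spectrum.exists_nnnorm_eq_spectralRadius_of_nonempty hne
  rw [T.spectralRadius_eq_nnnorm hT, ENNReal.coe_inj] at hnorm
  refine ⟨μ, ?_, ?_⟩
  · rw [hasEigenvalue_iff_mem_spectrum, ← ContinuousLinearMap.spectrum_eq]
    exact hμ
  · rw [← Real.norm_eq_abs, ← coe_nnnorm, hnorm, coe_nnnorm]

theorem ContinuousLinearMap.mul_norm_sub_le_norm_mul_self_sub_mul_self {X Y : E →L[ℝ] E}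
    {s : ℝ} (hX : (X - s • 1).IsPositive) (hY : Y.IsPositive) :
    s * ‖X - Y‖ ≤ ‖X * X - Y * Y‖ := by
  rcases subsingleton_or_nontrivial E with hE | hE
  · simp [Subsingleton.elim X Y]
  have hD : IsSelfAdjoint (X - Y) := by
    have hXsa : IsSelfAdjoint X := by
      simpa using hX.isSelfAdjoint.add ((IsSelfAdjoint.all s).smul (.one _))
    exact hXsa.sub hY.isSelfAdjoint
  obtain ⟨μ, hμ, hμD⟩ := hD.exists_hasEigenvalue_abs_eq_norm
  obtain ⟨v, hv⟩ := hμ.exists_hasEigenvector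
  have hDv : (X - Y) v = μ • v := hv.apply_eq_smul
  set p := ⟪X v, v⟫_ℝ
  set q := ⟪Y v, v⟫_ℝ
  have hp : s * ‖v‖ ^ 2 ≤ p := by
    have := hX.inner_nonneg_left v
    rwa [sub_apply, smul_apply, one_apply_eq_self, inner_sub_left, real_inner_smul_left,
      real_inner_self_eq_norm_sq, sub_nonneg] at this
  have hq : 0 ≤ q := hY.inner_nonneg_left v
  have hquad : ⟪(X * X - Y * Y) v, v⟫_ℝ = μ * (p + q) := by
    have hfactor : X * X - Y * Y = X * (X - Y) + (X - Y) * Y := by noncomm_ring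
    have hsymm : ⟪(X - Y) (Y v), v⟫_ℝ = ⟪Y v, (X - Y) v⟫_ℝ := hD.isSymmetric _ _
    rw [hfactor, add_apply, inner_add_left, mul_apply_eq_comp, mul_apply_eq_comp, hsymm, hDv,
      map_smul, real_inner_smul_left, real_inner_smul_right]
    ring
  have hv0 : 0 < ‖v‖ ^ 2 := by have := hv.2; positivity
  refine le_of_mul_le_mul_right ?_ hv0
  calc s * ‖X - Y‖ * ‖v‖ ^ 2 = |μ| * (s * ‖v‖ ^ 2) := by rw [hμD]; ring
    _ ≤ |μ| * (p + q) := by gcongr; linarith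
    _ ≤ |⟪(X * X - Y * Y) v, v⟫_ℝ| := by rw [hquad, abs_mul]; gcongr; exact le_abs_self _
    _ ≤ ‖(X * X - Y * Y) v‖ * ‖v‖ := abs_real_inner_le_norm _ _
    _ ≤ ‖X * X - Y * Y‖ * ‖v‖ * ‖v‖ := by gcongr; exact le_opNorm _ _
    _ = ‖X * X - Y * Y‖ * ‖v‖ ^ 2 := by ring

end FiniteDimensional

namespace Matrix

variable {n : Type*} [Fintype n] [DecidableEq n] {A : Matrix n n ℝ}

theorem PosSemidef.sqrt_mul_self (hA : A.PosSemidef) : hA.sqrt * hA.sqrt = A := by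
  set U : Matrix n n ℝ := hA.1.eigenvectorUnitary.1
  have hU : star U * U = 1 := Unitary.coe_star_mul_self hA.1.eigenvectorUnitary
  conv_rhs => rw [hA.1.spectral_theorem, Unitary.conjStarAlgAut_apply]
  calc hA.sqrt * hA.sqrt
      = U * (diagonal ((↑) ∘ Real.sqrt ∘ hA.1.eigenvalues) * (star U * U) *
          diagonal ((↑) ∘ Real.sqrt ∘ hA.1.eigenvalues)) * star U := by
        simp only [PosSemidef.sqrt, U, Matrix.mul_assoc]
    _ = _ := by
        rw [hU, Matrix.mul_one, diagonal_mul_diagonal]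
        congr 3
        funext i
        simp [Real.mul_self_sqrt (hA.eigenvalues_nonneg i)]

theorem PosSemidef.posSemidef_sqrt_sub_smul_one (hA : A.PosSemidef) {c : ℝ}
    (hc : ∀ i, c ≤ hA.1.eigenvalues i) : (hA.sqrt - √c • 1).PosSemidef := by
  set U : Matrix n n ℝ := hA.1.eigenvectorUnitary.1
  have hU : U * star U = 1 := Unitary.coe_mul_star_self hA.1.eigenvectorUnitary
  have hdiag : (diagonal fun i ↦ √(hA.1.eigenvalues i) - √c).PosSemidef :=
    posSemidef_diagonal_iff.mpr fun i ↦ sub_nonneg.mpr (Real.sqrt_le_sqrt (hc i))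
  convert hdiag.mul_mul_conjTranspose_same U using 1
  rw [← star_eq_conjTranspose, ← diagonal_sub, ← smul_one_eq_diagonal, Matrix.mul_sub,
    Matrix.sub_mul, Matrix.mul_smul, Matrix.smul_mul, Matrix.mul_one, hU]
  rfl

theorem PosSemidef.isPositive_toEuclideanCLM (hA : A.PosSemidef) :
    (toEuclideanCLM (𝕜 := ℝ) A).IsPositive :=
  isPositive_toEuclideanLin_iff.mpr hA

end Matrix

theorem stmt8_general {d : ℕ} [NeZero d] (G Ghat : Matrix (Fin d) (Fin d) ℝ)
    (hG : G.PosDef) (hGhat : Ghat.PosDef) (ε : ℝ)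
    (h1 : opNorm (G - Ghat) ≤ ε) :
    opNorm (hG.posSemidef.sqrt - hGhat.posSemidef.sqrt) ≤
      ε / Real.sqrt (⨅ i, hG.isHermitian.eigenvalues i) := by
  set a := ⨅ i, hG.isHermitian.eigenvalues i
  have ha_le : ∀ i, a ≤ hG.isHermitian.eigenvalues i := ciInf_le (Set.finite_range _).bddBelow
  have ha_pos : 0 < a := by
    obtain ⟨i, hi⟩ := exists_eq_ciInf_of_finite (f := hG.isHermitian.eigenvalues)
    rw [show a = hG.isHermitian.eigenvalues i from hi.symm]
    exact hG.eigenvalues_pos i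
  have hX := (hG.posSemidef.posSemidef_sqrt_sub_smul_one ha_le).isPositive_toEuclideanCLM
  have hY := (hGhat.posSemidef.posSemidef_sqrt_sub_smul_one
    hGhat.posSemidef.eigenvalues_nonneg).isPositive_toEuclideanCLM
  rw [map_sub, map_smul, map_one] at hX
  rw [Real.sqrt_zero, zero_smul, sub_zero] at hY
  have key := ContinuousLinearMap.mul_norm_sub_le_norm_mul_self_sub_mul_self hX hY
  rw [← map_mul, ← map_mul, Matrix.PosSemidef.sqrt_mul_self, Matrix.PosSemidef.sqrt_mul_self,
    ← map_sub, ← map_sub] at key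
  rw [opNorm, le_div_iff₀ (Real.sqrt_pos.mpr ha_pos), mul_comm]
  exact key.trans h1

theorem stmt8 {d : ℕ} [NeZero d] (G Ghat : Matrix (Fin d) (Fin d) ℝ)
    (hG : G.PosDef) (hGhat : Ghat.PosDef) (ε : ℝ) (hε : 0 ≤ ε)
    (h1 : opNorm (G - Ghat) ≤ ε)
    (h2 : ε < (3 / 4) * ⨅ i, hG.isHermitian.eigenvalues i) :
    opNorm (hG.posSemidef.sqrt - hGhat.posSemidef.sqrt) ≤
      ε / Real.sqrt (⨅ i, hG.isHermitian.eigenvalues i) :=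
  stmt8_general G Ghat hG hGhat ε h1
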